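/- Let R = {ab → a} and S = {c → bc} over {a,b,c}. Then R/S is not terminating (there is a loop abc →_R ac →_S abc), yet every string in RFC(R ∪ S) = a ∪ b⁺c contains no factor ab, so R/S is terminating on RFC(R ∪ S). Hence relative termination is not in general reducible to termination on right-hand sides of forward closures. -/

import Mathlib

/-! The loop `abc →_R ac →_S abc` shows that `R/S` does not terminate. On the other hand the
language `a ∪ b⁺c` contains the right-hand sides `a` and `bc` and is closed under `S`-steps, while
none of its words has an `R`-redex `ab`; so it is closed under all steps of `R ∪ S`, and it absorbs
the overlaps of forward closures since the only overlap, of `ab` with a right-hand side, ends in the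
right-hand side `a`. Hence `RFC(R ∪ S) = a ∪ b⁺c`, from which no `R`-step can ever be made. -/

inductive ABC where
  | a : ABC
  | b : ABC
  | c : ABC
deriving DecidableEq

def Step {Γ : Type*} (R : Set (List Γ × List Γ)) (u v : List Γ) : Prop :=
  ∃ (x y l r : List Γ), (l, r) ∈ R ∧ u = x ++ l ++ y ∧ v = x ++ r ++ y

/-- `SN(R/S, L)`: no infinite `(R∪S)`-derivation starting in `L` has infinitely
many `R`-steps. -/
def SNRelOn {Γ : Type*} (R S : Set (List Γ × List Γ)) (L : Set (List Γ)) : Prop :=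
  ¬ ∃ f : ℕ → List Γ, f 0 ∈ L ∧ (∀ n, Step (R ∪ S) (f n) (f (n + 1))) ∧
      (∀ N, ∃ n, N ≤ n ∧ Step R (f n) (f (n + 1)))

/-- `SN(R/S)` on all strings. -/
def SNRel {Γ : Type*} (R S : Set (List Γ × List Γ)) : Prop :=
  SNRelOn R S Set.univ

/-- Right-hand sides of forward closures of `R`. -/
inductive RFC {Γ : Type*} (R : Set (List Γ × List Γ)) : List Γ → Prop where
  | base {l r : List Γ} : (l, r) ∈ R → RFC R r
  | inner {x y l r : List Γ} : RFC R (x ++ l ++ y) → (l, r) ∈ R → RFC R (x ++ r ++ y)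
  | eat {x l₁ l₂ r : List Γ} : RFC R (x ++ l₁) → (l₁ ++ l₂, r) ∈ R →
      l₁ ≠ [] → l₂ ≠ [] → RFC R (x ++ r)

open ABC in
/-- `R = {ab → a}`. -/
def R12 : Set (List ABC × List ABC) := {([a, b], [a])}

open ABC in
/-- `S = {c → bc}`. -/
def S12 : Set (List ABC × List ABC) := {([c], [b, c])}

theorem List.eq_replicate_of_append_cons_eq {α : Type*} {a c : α} (hac : a ≠ c) :
    ∀ {x y : List α} {n : ℕ}, x ++ c :: y = replicate n a ++ [c] → x = replicate n a ∧ y = []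
  | [], y, 0, h => by simpa using h
  | [], y, n + 1, h => by
    simp only [nil_append, replicate_succ, cons_append, cons.injEq] at h
    exact absurd h.1.symm hac
  | z :: x, y, 0, h => by simp at h
  | z :: x, y, n + 1, h => by
    simp only [cons_append, replicate_succ, cons.injEq] at h
    obtain ⟨rfl, h⟩ := h
    obtain ⟨rfl, rfl⟩ := eq_replicate_of_append_cons_eq hac h
    exact ⟨rfl, rfl⟩

section Rewriting

variable {Γ : Type*} {R S : Set (List Γ × List Γ)} {L : Set (List Γ)} {u v : List Γ}

theorem Step.mono (hRS : R ⊆ S) : Step R u v → Step S u v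
  | ⟨x, y, l, r, hlr, hu, hv⟩ => ⟨x, y, l, r, hRS hlr, hu, hv⟩

theorem step_union_iff : Step (R ∪ S) u v ↔ Step R u v ∨ Step S u v := by
  constructor
  · rintro ⟨x, y, l, r, hlr | hlr, hu, hv⟩
    exacts [.inl ⟨x, y, l, r, hlr, hu, hv⟩, .inr ⟨x, y, l, r, hlr, hu, hv⟩]
  · rintro (h | h)
    exacts [h.mono Set.subset_union_left, h.mono Set.subset_union_right]

theorem RFC.of_step (hu : RFC R u) (h : Step R u v) : RFC R v := by
  obtain ⟨x, y, l, r, hlr, rfl, rfl⟩ := h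
  exact hu.inner hlr

theorem not_snRel_of_step_of_step (huv : Step R u v) (hvu : Step S v u) : ¬ SNRel R S := by
  let f : ℕ → List Γ := fun n => if Even n then u else v
  have hstep : ∀ n, Step (R ∪ S) (f n) (f (n + 1)) := by
    intro n
    by_cases hn : Even n
    · simpa [f, hn, Nat.even_add_one] using huv.mono Set.subset_union_left
    · simpa [f, hn, Nat.even_add_one] using hvu.mono Set.subset_union_right
  refine fun hSN => hSN ⟨f, Set.mem_univ _, hstep, fun N => ⟨2 * N, by omega, ?_⟩⟩
  simpa [f, Nat.even_add_one] using huv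

theorem snRelOn_of_step_closed (hS : ∀ u v, u ∈ L → Step S u v → v ∈ L)
    (hR : ∀ u v, u ∈ L → ¬ Step R u v) : SNRelOn R S L := by
  rintro ⟨f, hf0, hstep, hR_often⟩
  have hmem : ∀ n, f n ∈ L := by
    intro n
    induction n with
    | zero => exact hf0
    | succ n ih =>
      exact (step_union_iff.mp (hstep n)).elim (fun h => (hR _ _ ih h).elim) (hS _ _ ih)
  obtain ⟨n, -, hn⟩ := hR_often 0
  exact hR _ _ (hmem n) hn

end Rewriting

namespace ABC

def aUnionBPlusC : Set (List ABC) :=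
  {w | w = [a] ∨ ∃ n : ℕ, 1 ≤ n ∧ w = List.replicate n b ++ [c]}

theorem mem_R12_union_S12 {l r : List ABC} :
    (l, r) ∈ R12 ∪ S12 ↔ (l = [a, b] ∧ r = [a]) ∨ (l = [c] ∧ r = [b, c]) := by
  simp only [R12, S12, Set.mem_union, Set.mem_singleton_iff, Prod.mk.injEq]

theorem exists_ab_factor_of_step_R12 {u v : List ABC} (h : Step R12 u v) :
    ∃ x y, u = x ++ [a, b] ++ y := by
  obtain ⟨x, y, l, r, hlr, rfl, -⟩ := h
  obtain ⟨rfl, -⟩ : l = [a, b] ∧ r = [a] := by simpa [R12] using hlr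
  exact ⟨x, y, rfl⟩

theorem not_ab_factor_of_mem_aUnionBPlusC {w : List ABC} (hw : w ∈ aUnionBPlusC) :
    ¬ ∃ x y, w = x ++ [a, b] ++ y := by
  rintro ⟨x, y, rfl⟩
  rcases hw with hw | ⟨n, -, hw⟩
  · have := congrArg List.length hw
    simp only [List.length_append, List.length_cons, List.length_nil] at this
    omega
  · simpa [List.mem_replicate] using congrArg (a ∈ ·) hw

theorem mem_aUnionBPlusC_of_step_S12 {u v : List ABC} (hu : u ∈ aUnionBPlusC)
    (h : Step S12 u v) : v ∈ aUnionBPlusC := by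
  obtain ⟨x, y, l, r, hlr, rfl, rfl⟩ := h
  obtain ⟨rfl, rfl⟩ : l = [c] ∧ r = [b, c] := by simpa [S12] using hlr
  rcases hu with hu | ⟨n, hn, hu⟩
  · simpa using congrArg (c ∈ ·) hu
  · obtain ⟨rfl, rfl⟩ := List.eq_replicate_of_append_cons_eq (show b ≠ c by decide) (by simpa using hu)
    exact .inr ⟨n + 1, by omega, by simp [List.replicate_succ']⟩

theorem mem_aUnionBPlusC_of_rfc {w : List ABC} (hw : RFC (R12 ∪ S12) w) :
    w ∈ aUnionBPlusC := by
  induction hw with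
  | base hlr =>
    rcases mem_R12_union_S12.mp hlr with ⟨-, rfl⟩ | ⟨-, rfl⟩
    exacts [.inl rfl, .inr ⟨1, le_rfl, rfl⟩]
  | @inner x y l r _ hlr ih =>
    rcases mem_R12_union_S12.mp hlr with ⟨rfl, rfl⟩ | ⟨rfl, rfl⟩
    · exact (not_ab_factor_of_mem_aUnionBPlusC ih ⟨x, y, rfl⟩).elim
    · exact mem_aUnionBPlusC_of_step_S12 ih ⟨x, y, [c], [b, c], rfl, rfl, rfl⟩
  | @eat x l₁ l₂ r _ hlr hl₁ hl₂ ih =>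
    have hlen₁ := List.length_pos_iff.mpr hl₁
    have hlen₂ := List.length_pos_iff.mpr hl₂
    rcases mem_R12_union_S12.mp hlr with ⟨hl, rfl⟩ | ⟨hl, -⟩
    · -- the overlap eats `a` from the end of `x ++ l₁` and writes it back
      have hl₁a : l₁ = [a] := by
        have hlen : l₁.length = 1 := by
          have := congrArg List.length hl
          simp only [List.length_append, List.length_cons, List.length_nil] at this
          omega
        simpa [List.take_left' hlen] using congrArg (List.take 1) hl
      rwa [hl₁a] at ih
    · have := congrArg List.length hl
      simp only [List.length_append, List.length_singleton] at this
      omega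

theorem rfc_replicate_b_append_c (n : ℕ) :
    RFC (R12 ∪ S12) (List.replicate (n + 1) b ++ [c]) := by
  induction n with
  | zero => exact .base (Or.inr rfl)
  | succ n ih =>
    have := ih.of_step ⟨List.replicate n b ++ [b], [], [c], [b, c], Or.inr rfl,
      by simp [List.replicate_succ'], rfl⟩
    simpa [List.replicate_succ'] using this

theorem rfc_iff_mem_aUnionBPlusC {w : List ABC} :
    RFC (R12 ∪ S12) w ↔ w ∈ aUnionBPlusC := by
  refine ⟨mem_aUnionBPlusC_of_rfc, ?_⟩
  rintro (rfl | ⟨_ | n, hn, rfl⟩)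
  · exact .base (Or.inl rfl)
  · omega
  · exact rfc_replicate_b_append_c n

end ABC

open ABC in
/-- `R/S` is not terminating, yet `RFC(R∪S) = a ∪ b⁺c` contains no factor `ab`,
so `R/S` is terminating on `RFC(R∪S)`: relative termination is not in general
reducible to termination on right-hand sides of forward closures. -/
theorem rel_rfc_counterexample :
    ¬ SNRel R12 S12 ∧
    (∀ w : List ABC, RFC (R12 ∪ S12) w ↔
      (w = [a] ∨ ∃ n : ℕ, 1 ≤ n ∧ w = List.replicate n b ++ [c])) ∧
    (∀ w : List ABC, RFC (R12 ∪ S12) w → ¬ ∃ x y : List ABC, w = x ++ [a, b] ++ y) ∧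
    SNRelOn R12 S12 { w | RFC (R12 ∪ S12) w } := by
  have hloop : ¬ SNRel R12 S12 :=
    not_snRel_of_step_of_step (u := [a, b, c]) (v := [a, c])
      ⟨[], [c], [a, b], [a], rfl, rfl, rfl⟩ ⟨[a], [], [c], [b, c], rfl, rfl, rfl⟩
  have hfree : ∀ w, RFC (R12 ∪ S12) w → ¬ ∃ x y, w = x ++ [a, b] ++ y :=
    fun _ hw => not_ab_factor_of_mem_aUnionBPlusC (mem_aUnionBPlusC_of_rfc hw)
  refine ⟨hloop, fun _ => rfc_iff_mem_aUnionBPlusC, hfree, ?_⟩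
  exact snRelOn_of_step_closed
    (fun _ _ hu h => RFC.of_step hu (h.mono Set.subset_union_right))
    (fun _ _ hu h => hfree _ hu (exists_ab_factor_of_step_R12 h))
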